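/- arXiv:1503.02163 — 3 statements merged into one kernel-verified Lean document; each statement's English description precedes it below -/
import Mathlib

section
/- Let 𝒳 be a set, x_1,...,x_n, x′_1,...,x′_n ∈ 𝒳, and let f, g : 𝒳 → [0,1]. Let Φ : ℝⁿ → ℝ be twice differentiable and satisfy ‖∂_k Φ‖_∞ ≤ L for every k ∈ {1,...,n} and √(Σ_{k=1}^n ‖Σ_{l : l ≠ k} (∂_{lk} Φ)²‖_∞) ≤ M. For σ ∈ {0,1}ⁿ set Y_f(σ) = Φ( Σ_i [σ_i f(x_i) + (1−σ_i) f(x′_i)] e_i ) − Φ( Σ_i [σ_i f(x′_i) + (1−σ_i) f(x_i)] e_i ), and define Y_g analogously; set Z(σ) = Y_f(σ) − Y_g(σ), and d(f,g)² = Σ_{i=1}^n (f(x_i) − g(x_i))² + (f(x′_i) − g(x′_i))². If σ is chosen uniformly at random from {0,1}ⁿ, then for every s > 0, Pr{ Z(σ) − E[Z(σ)] > s } ≤ exp( −s² / (8 (M² + L²) d(f,g)²) ). -/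
open Finset

/-- `∂_k Φ`, the partial derivative of `Φ : ℝⁿ → ℝ` with respect to the `k`-th variable. -/
noncomputable def pderiv1 {n : ℕ} (Φ : (Fin n → ℝ) → ℝ) (k : Fin n) (x : Fin n → ℝ) : ℝ :=
  fderiv ℝ Φ x (Pi.single k 1)

/-- `∂_{lk} Φ`, the second mixed partial derivative of `Φ` w.r.t. the `k`-th and `l`-th
variables. -/
noncomputable def pderiv2 {n : ℕ} (Φ : (Fin n → ℝ) → ℝ) (l k : Fin n) (x : Fin n → ℝ) : ℝ :=
  fderiv ℝ (fun y => pderiv1 Φ k y) x (Pi.single l 1)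

/-- The process `Y_f(σ) = Φ(∑_i [σ_i f(x_i) + (1-σ_i) f(x'_i)] e_i)
- Φ(∑_i [σ_i f(x'_i) + (1-σ_i) f(x_i)] e_i)`, with `σ ∈ {0,1}ⁿ` encoded by `Fin n → Bool`. -/
noncomputable def Yproc {𝒳 : Type*} {n : ℕ} (Φ : (Fin n → ℝ) → ℝ)
    (x x' : Fin n → 𝒳) (f : 𝒳 → ℝ) (σ : Fin n → Bool) : ℝ :=
  Φ (fun i => if σ i then f (x i) else f (x' i)) -
    Φ (fun i => if σ i then f (x' i) else f (x i))

/-!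
Flipping `σ_k` changes `Z` by at most
`c_k = 2 (√C_k d(f,g) + L (|f(x_k) - g(x_k)| + |f(x'_k) - g(x'_k)|))`, where `C_k` bounds
`∑_{l ≠ k} (∂_{lk} Φ)²`. Indeed, the flip turns each of the two `Φ`-differences in `Y_f - Y_g` into
an increment of `Φ` in the `k`-th coordinate, and the increments for `f` and for `g` are compared
in two steps: along the `k`-th coordinate the gap between them has derivative `∂_k Φ(p) - ∂_k Φ(q)`
at points `p, q` agreeing in that coordinate, which by the mean value theorem and Cauchy–Schwarz
is at most `√C_k · d(f,g)`; the remaining mismatch of the endpoints costs `L` per unit.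
Since `∑_k c_k² ≤ 16 (M² + L²) d(f,g)²`, the claim is McDiarmid's inequality on `{0,1}ⁿ`, proved
by induction on `n` from `cosh t ≤ exp (t² / 2)` followed by a Chernoff bound with
`λ = 4 s / ∑_k c_k²`.
-/

open Real Function

lemma exp_add_exp_le (a b : ℝ) :
    exp a + exp b ≤ 2 * exp ((a + b) / 2) * exp ((b - a) ^ 2 / 8) := by
  have hsplit : exp a + exp b = 2 * exp ((a + b) / 2) * cosh ((b - a) / 2) := by
    have ha : exp a = exp ((a + b) / 2) * exp (-((b - a) / 2)) := by rw [← exp_add]; ring_nf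
    have hb : exp b = exp ((a + b) / 2) * exp ((b - a) / 2) := by rw [← exp_add]; ring_nf
    rw [cosh_eq, ha, hb]
    ring
  calc exp a + exp b = 2 * exp ((a + b) / 2) * cosh ((b - a) / 2) := hsplit
    _ ≤ 2 * exp ((a + b) / 2) * exp (((b - a) / 2) ^ 2 / 2) := by
      gcongr; exact cosh_le_exp_half_sq _
    _ = 2 * exp ((a + b) / 2) * exp ((b - a) ^ 2 / 8) := by ring_nf

lemma card_filter_le_sum_exp {ι : Type*} (t : Finset ι) (p : ι → Prop) [DecidablePred p]
    (G : ι → ℝ) (hG : ∀ i ∈ t, p i → 0 ≤ G i) :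
    (#(t.filter p) : ℝ) ≤ ∑ i ∈ t, exp (G i) := by
  calc (#(t.filter p) : ℝ) = ∑ i ∈ t.filter p, 1 := by simp
    _ ≤ ∑ i ∈ t.filter p, exp (G i) := by
      refine sum_le_sum fun i hi => ?_
      rw [mem_filter] at hi
      exact one_le_exp (hG i hi.1 hi.2)
    _ ≤ ∑ i ∈ t, exp (G i) :=
      sum_le_sum_of_subset_of_nonneg (filter_subset _ _) fun _ _ _ => (exp_pos _).le

section Hypercube

variable {n : ℕ}

noncomputable def cubeAvg (F : (Fin n → Bool) → ℝ) : ℝ :=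
  (2 ^ n : ℝ)⁻¹ * ∑ σ, F σ

def BoundedDifferences (F : (Fin n → Bool) → ℝ) (c : Fin n → ℝ) : Prop :=
  ∀ σ k, |F (update σ k true) - F (update σ k false)| ≤ c k

lemma sum_cube_succ (h : (Fin (n + 1) → Bool) → ℝ) :
    ∑ σ, h σ = ∑ ρ : Fin n → Bool, (h (Fin.cons false ρ) + h (Fin.cons true ρ)) := by
  rw [← (Fin.consEquiv fun _ => Bool).sum_comp, Fintype.sum_prod_type, Fintype.sum_bool,
    ← sum_add_distrib]
  simp [Fin.consEquiv, add_comm]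

lemma cubeAvg_succ (F : (Fin (n + 1) → Bool) → ℝ) :
    cubeAvg F = cubeAvg fun ρ => (F (Fin.cons false ρ) + F (Fin.cons true ρ)) / 2 := by
  rw [cubeAvg, cubeAvg, sum_cube_succ, ← sum_div, pow_succ, mul_inv]
  ring

lemma cubeAvg_affine (F : (Fin n → Bool) → ℝ) (a b : ℝ) :
    cubeAvg (fun σ => a * F σ + b) = a * cubeAvg F + b := by
  simp only [cubeAvg, sum_add_distrib, ← mul_sum, sum_const, card_univ, Fintype.card_fun,
    Fintype.card_bool, Fintype.card_fin, nsmul_eq_mul, Nat.cast_pow, Nat.cast_ofNat]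
  field_simp

lemma BoundedDifferences.affine {F : (Fin n → Bool) → ℝ} {c : Fin n → ℝ}
    (hF : BoundedDifferences F c) {a : ℝ} (ha : 0 ≤ a) (b : ℝ) :
    BoundedDifferences (fun σ => a * F σ + b) (fun k => a * c k) := by
  intro σ k
  rw [add_sub_add_right_eq_sub, ← mul_sub, abs_mul, abs_of_nonneg ha]
  exact mul_le_mul_of_nonneg_left (hF σ k) ha

lemma BoundedDifferences.half_sum_cons {F : (Fin (n + 1) → Bool) → ℝ} {c : Fin (n + 1) → ℝ}
    (hF : BoundedDifferences F c) :
    BoundedDifferences (fun ρ => (F (Fin.cons false ρ) + F (Fin.cons true ρ)) / 2)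
      (fun k => c k.succ) := by
  intro ρ k
  have h0 := hF (Fin.cons false ρ) k.succ
  have h1 := hF (Fin.cons true ρ) k.succ
  simp only [← Fin.cons_update, abs_le] at h0 h1
  rw [abs_le]
  constructor <;> linarith [h0.1, h0.2, h1.1, h1.2]

theorem sum_exp_le_of_boundedDifferences {F : (Fin n → Bool) → ℝ} {c : Fin n → ℝ}
    (hF : BoundedDifferences F c) :
    ∑ σ, exp (F σ) ≤ 2 ^ n * exp (cubeAvg F + (∑ k, c k ^ 2) / 8) := by
  induction n with
  | zero => simp [cubeAvg]
  | succ n ih =>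
    set G : (Fin n → Bool) → ℝ := fun ρ => (F (Fin.cons false ρ) + F (Fin.cons true ρ)) / 2
    have hpair : ∀ ρ, exp (F (Fin.cons false ρ)) + exp (F (Fin.cons true ρ))
        ≤ 2 * exp (c 0 ^ 2 / 8) * exp (G ρ) := by
      intro ρ
      have hflip := hF (Fin.cons false ρ) 0
      rw [Fin.update_cons_zero, Fin.update_cons_zero] at hflip
      have hsq := sq_le_sq' (abs_le.1 hflip).1 (abs_le.1 hflip).2
      calc _ ≤ 2 * exp (G ρ) * exp ((F (Fin.cons true ρ) - F (Fin.cons false ρ)) ^ 2 / 8) :=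
            exp_add_exp_le _ _
        _ ≤ 2 * exp (G ρ) * exp (c 0 ^ 2 / 8) := by gcongr
        _ = 2 * exp (c 0 ^ 2 / 8) * exp (G ρ) := by ring
    calc ∑ σ, exp (F σ)
        = ∑ ρ, (exp (F (Fin.cons false ρ)) + exp (F (Fin.cons true ρ))) := sum_cube_succ _
      _ ≤ ∑ ρ, 2 * exp (c 0 ^ 2 / 8) * exp (G ρ) := sum_le_sum fun ρ _ => hpair ρ
      _ = 2 * exp (c 0 ^ 2 / 8) * ∑ ρ, exp (G ρ) := (mul_sum _ _ _).symm
      _ ≤ 2 * exp (c 0 ^ 2 / 8)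
            * (2 ^ n * exp (cubeAvg G + (∑ k : Fin n, c k.succ ^ 2) / 8)) := by
        gcongr; exact ih hF.half_sum_cons
      _ = 2 ^ (n + 1) * exp (cubeAvg F + (∑ k, c k ^ 2) / 8) := by
        rw [cubeAvg_succ, Fin.sum_univ_succ, pow_succ, add_div, ← add_assoc,
          add_right_comm, exp_add (_ + _)]
        ring

theorem card_filter_lt_sub_cubeAvg_le {F : (Fin n → Bool) → ℝ} {c : Fin n → ℝ}
    (hF : BoundedDifferences F c) {K s : ℝ} (hK : ∑ k, c k ^ 2 ≤ K) (hs : 0 ≤ s) :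
    ((univ.filter fun σ => s < F σ - cubeAvg F).card : ℝ) / 2 ^ n ≤ exp (-2 * s ^ 2 / K) := by
  have hpow : (0 : ℝ) < 2 ^ n := by positivity
  rcases (hK.trans' (sum_nonneg fun k _ => sq_nonneg (c k))).eq_or_lt with hK0 | hK0
  · rw [← hK0, div_zero, exp_zero, div_le_one hpow]
    calc _ ≤ ((univ : Finset (Fin n → Bool)).card : ℝ) := by gcongr; exact filter_subset _ _
      _ = 2 ^ n := by simp
  set t := 4 * s / K
  have ht : 0 ≤ t := by positivity
  have hG := hF.affine ht (-t * (cubeAvg F + s))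
  have hG_avg : cubeAvg (fun σ => t * F σ + -t * (cubeAvg F + s)) = -t * s := by
    rw [cubeAvg_affine]; ring
  rw [div_le_iff₀ hpow]
  calc ((univ.filter fun σ => s < F σ - cubeAvg F).card : ℝ)
      ≤ ∑ σ, exp (t * F σ + -t * (cubeAvg F + s)) :=
        card_filter_le_sum_exp _ _ _ fun σ _ hσ => by nlinarith
    _ ≤ 2 ^ n * exp (-t * s + (∑ k, (t * c k) ^ 2) / 8) := by
        rw [← hG_avg]; exact sum_exp_le_of_boundedDifferences hG
    _ ≤ 2 ^ n * exp (-t * s + t ^ 2 * K / 8) := by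
        simp_rw [mul_pow, ← mul_sum]
        gcongr
    _ = exp (-2 * s ^ 2 / K) * 2 ^ n := by
        rw [mul_comm]; congr 2; simp only [t]; field_simp; ring

end Hypercube

lemma abs_sub_le_of_hasDerivAt {φ φ' : ℝ → ℝ} {C : ℝ} (hφ : ∀ r, HasDerivAt φ (φ' r) r)
    (hC : ∀ r, |φ' r| ≤ C) (a b : ℝ) : |φ b - φ a| ≤ C * |b - a| :=
  convex_univ.norm_image_sub_le_of_norm_hasDerivWithin_le (fun r _ => (hφ r).hasDerivWithinAt)
    (fun r _ => hC r) (Set.mem_univ a) (Set.mem_univ b)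

lemma fderiv_apply_eq_sum_pderiv1 {n : ℕ} (Φ : (Fin n → ℝ) → ℝ) (y u : Fin n → ℝ) :
    fderiv ℝ Φ y u = ∑ l, u l * pderiv1 Φ l y := by
  conv_lhs => rw [← univ_sum_single u]
  refine (map_sum _ _ _).trans (sum_congr rfl fun l _ => ?_)
  have hsingle : Pi.single l (u l) = u l • Pi.single (M := fun _ => ℝ) l 1 := by
    rw [← Pi.single_smul', smul_eq_mul, mul_one]
  rw [hsingle, map_smul, smul_eq_mul, pderiv1]

section Derivatives

variable {n : ℕ} {Φ : (Fin n → ℝ) → ℝ}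

lemma hasDerivAt_comp_update (hΦ : Differentiable ℝ Φ) (p : Fin n → ℝ) (k : Fin n) (r : ℝ) :
    HasDerivAt (fun r => Φ (update p k r)) (pderiv1 Φ k (update p k r)) r :=
  (hΦ _).hasFDerivAt.comp_hasDerivAt r (hasDerivAt_update p k r)

lemma abs_sub_update_le (hΦ : Differentiable ℝ Φ) {k : Fin n} {L : ℝ}
    (hL : ∀ y, |pderiv1 Φ k y| ≤ L) (q : Fin n → ℝ) (a b : ℝ) :
    |Φ (update q k b) - Φ (update q k a)| ≤ L * |b - a| :=
  abs_sub_le_of_hasDerivAt (hasDerivAt_comp_update hΦ q k) (fun _ => hL _) a b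

lemma abs_fderiv_pderiv1_le {k : Fin n} {y u : Fin n → ℝ} (hu : u k = 0) :
    |fderiv ℝ (pderiv1 Φ k) y u|
      ≤ √(∑ l ∈ univ.erase k, pderiv2 Φ l k y ^ 2) * √(∑ l ∈ univ.erase k, u l ^ 2) := by
  rw [fderiv_apply_eq_sum_pderiv1, ← sum_erase_add _ _ (mem_univ k), hu, zero_mul, add_zero,
    mul_comm, ← sqrt_mul (sum_nonneg fun _ _ => sq_nonneg _)]
  exact abs_le_sqrt (sum_mul_sq_le_sq_mul_sq _ _ _)

lemma abs_pderiv1_sub_le {k : Fin n} (hΦ2 : Differentiable ℝ (pderiv1 Φ k)) {Ck : ℝ}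
    (hC : ∀ y, ∑ l ∈ univ.erase k, pderiv2 Φ l k y ^ 2 ≤ Ck) {v w : Fin n → ℝ} (hvw : v k = w k) :
    |pderiv1 Φ k v - pderiv1 Φ k w| ≤ √Ck * √(∑ l ∈ univ.erase k, (v l - w l) ^ 2) := by
  have hline : ∀ t : ℝ, HasDerivAt (fun t : ℝ => w + t • (v - w)) (v - w) t := fun t => by
    simpa using ((hasDerivAt_id t).smul_const (v - w)).const_add w
  simpa using abs_sub_le_of_hasDerivAt
    (fun t => (hΦ2 _).hasFDerivAt.comp_hasDerivAt t (hline t))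
    (fun t => (abs_fderiv_pderiv1_le (by simp [hvw])).trans
      (mul_le_mul_of_nonneg_right (sqrt_le_sqrt (hC _)) (sqrt_nonneg _))) 0 1

lemma abs_sub_sub_update_le (hΦ : Differentiable ℝ Φ) {k : Fin n}
    (hΦ2 : Differentiable ℝ (pderiv1 Φ k)) {L : ℝ} (hL : ∀ y, |pderiv1 Φ k y| ≤ L) {Ck : ℝ}
    (hC : ∀ y, ∑ l ∈ univ.erase k, pderiv2 Φ l k y ^ 2 ≤ Ck) (p q : Fin n → ℝ) (a b a' b' : ℝ) :
    |(Φ (update p k b) - Φ (update p k a)) - (Φ (update q k b') - Φ (update q k a'))|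
      ≤ √Ck * √(∑ l ∈ univ.erase k, (p l - q l) ^ 2) * |b - a| + L * (|b - b'| + |a - a'|) := by
  have hgap : |(Φ (update p k b) - Φ (update q k b)) - (Φ (update p k a) - Φ (update q k a))|
      ≤ √Ck * √(∑ l ∈ univ.erase k, (p l - q l) ^ 2) * |b - a| := by
    refine abs_sub_le_of_hasDerivAt
      (fun r => (hasDerivAt_comp_update hΦ p k r).sub (hasDerivAt_comp_update hΦ q k r))
      (fun r => ?_) a b
    have hoff : ∑ l ∈ univ.erase k, (update p k r l - update q k r l) ^ 2
        = ∑ l ∈ univ.erase k, (p l - q l) ^ 2 :=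
      sum_congr rfl fun l hl => by
        rw [update_of_ne (ne_of_mem_erase hl), update_of_ne (ne_of_mem_erase hl)]
    simpa [hoff] using abs_pderiv1_sub_le hΦ2 hC (v := update p k r) (w := update q k r) (by simp)
  have hb := abs_sub_update_le hΦ hL q b' b
  have ha := abs_sub_update_le hΦ hL q a' a
  rw [abs_le] at hgap hb ha ⊢
  constructor <;> linarith [hgap.1, hgap.2, hb.1, hb.2, ha.1, ha.2]

end Derivatives

section CubePoints

variable {𝒳 : Type*} {n : ℕ}

def cubePoint (x x' : Fin n → 𝒳) (h : 𝒳 → ℝ) (σ : Fin n → Bool) : Fin n → ℝ :=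
  fun i => if σ i then h (x i) else h (x' i)

lemma Yproc_eq_cubePoint (Φ : (Fin n → ℝ) → ℝ) (x x' : Fin n → 𝒳) (h : 𝒳 → ℝ)
    (σ : Fin n → Bool) :
    Yproc Φ x x' h σ = Φ (cubePoint x x' h σ) - Φ (cubePoint x' x h σ) :=
  rfl

lemma cubePoint_update (x x' : Fin n → 𝒳) (h : 𝒳 → ℝ) (σ : Fin n → Bool) (k : Fin n)
    (b : Bool) :
    cubePoint x x' h (update σ k b)
      = update (cubePoint x x' h σ) k (if b then h (x k) else h (x' k)) := by
  funext i
  exact apply_update (fun i (c : Bool) => if c then h (x i) else h (x' i)) σ k b i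

lemma sq_cubePoint_sub_le (x x' : Fin n → 𝒳) (f g : 𝒳 → ℝ) (σ : Fin n → Bool) (l : Fin n) :
    (cubePoint x x' f σ l - cubePoint x x' g σ l) ^ 2
      ≤ (f (x l) - g (x l)) ^ 2 + (f (x' l) - g (x' l)) ^ 2 := by
  simp only [cubePoint]
  split_ifs
  · exact le_add_of_nonneg_right (sq_nonneg _)
  · exact le_add_of_nonneg_left (sq_nonneg _)

variable {Φ : (Fin n → ℝ) → ℝ} {L : ℝ} {C : Fin n → ℝ}

lemma abs_sub_sub_cubePoint_update_le (x x' : Fin n → 𝒳) {f : 𝒳 → ℝ}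
    (hf : ∀ y, f y ∈ Set.Icc (0 : ℝ) 1) (g : 𝒳 → ℝ) (hΦ : Differentiable ℝ Φ)
    (hΦ2 : ∀ k, Differentiable ℝ (pderiv1 Φ k)) (hL : ∀ k y, |pderiv1 Φ k y| ≤ L)
    (hC : ∀ k y, ∑ l ∈ univ.erase k, pderiv2 Φ l k y ^ 2 ≤ C k) (σ : Fin n → Bool) (k : Fin n) :
    |(Φ (update (cubePoint x x' f σ) k (f (x k))) - Φ (update (cubePoint x x' f σ) k (f (x' k))))
        - (Φ (update (cubePoint x x' g σ) k (g (x k)))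
          - Φ (update (cubePoint x x' g σ) k (g (x' k))))|
      ≤ √(C k) * √(∑ i, ((f (x i) - g (x i)) ^ 2 + (f (x' i) - g (x' i)) ^ 2))
        + L * (|f (x k) - g (x k)| + |f (x' k) - g (x' k)|) := by
  have hdist : √(∑ l ∈ univ.erase k, (cubePoint x x' f σ l - cubePoint x x' g σ l) ^ 2)
      ≤ √(∑ i, ((f (x i) - g (x i)) ^ 2 + (f (x' i) - g (x' i)) ^ 2)) :=
    sqrt_le_sqrt <| (sum_le_sum_of_subset_of_nonneg (erase_subset _ _)
      fun _ _ _ => sq_nonneg _).trans (sum_le_sum fun l _ => sq_cubePoint_sub_le x x' f g σ l)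
  have hjump : |f (x k) - f (x' k)| ≤ 1 := by
    obtain ⟨h0, h1⟩ := hf (x k)
    obtain ⟨h0', h1'⟩ := hf (x' k)
    exact abs_sub_le_iff.2 ⟨by linarith, by linarith⟩
  refine (abs_sub_sub_update_le hΦ (hΦ2 k) (hL k) (hC k) _ _ _ _ _ _).trans ?_
  calc _ ≤ √(C k) * √(∑ i, ((f (x i) - g (x i)) ^ 2 + (f (x' i) - g (x' i)) ^ 2)) * 1
        + L * (|f (x k) - g (x k)| + |f (x' k) - g (x' k)|) := by gcongr
    _ = _ := by rw [mul_one]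

theorem boundedDifferences_Yproc_sub (x x' : Fin n → 𝒳) {f : 𝒳 → ℝ}
    (hf : ∀ y, f y ∈ Set.Icc (0 : ℝ) 1) (g : 𝒳 → ℝ) (hΦ : Differentiable ℝ Φ)
    (hΦ2 : ∀ k, Differentiable ℝ (pderiv1 Φ k)) (hL : ∀ k y, |pderiv1 Φ k y| ≤ L)
    (hC : ∀ k y, ∑ l ∈ univ.erase k, pderiv2 Φ l k y ^ 2 ≤ C k) :
    BoundedDifferences (fun σ => Yproc Φ x x' f σ - Yproc Φ x x' g σ) fun k =>
      2 * (√(C k) * √(∑ i, ((f (x i) - g (x i)) ^ 2 + (f (x' i) - g (x' i)) ^ 2))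
        + L * (|f (x k) - g (x k)| + |f (x' k) - g (x' k)|)) := by
  intro σ k
  have h := abs_sub_sub_cubePoint_update_le x x' hf g hΦ hΦ2 hL hC σ k
  have h' := abs_sub_sub_cubePoint_update_le x' x hf g hΦ hΦ2 hL hC σ k
  rw [sum_congr rfl fun i _ => add_comm _ _, add_comm |f (x' k) - g (x' k)|] at h'
  simp only [Yproc_eq_cubePoint, cubePoint_update, if_true, Bool.false_eq_true, if_false]
  rw [abs_le] at h h' ⊢
  constructor <;> linarith [h.1, h.2, h'.1, h'.2]

end CubePoints

lemma sum_sq_two_mul_sqrt_mul_add_le {ι : Type*} [Fintype ι] (α β C : ι → ℝ)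
    (hC0 : ∀ k, 0 ≤ C k) {L M : ℝ} (hCM : √(∑ k, C k) ≤ M) :
    ∑ k, (2 * (√(C k) * √(∑ i, (α i ^ 2 + β i ^ 2)) + L * (|α k| + |β k|))) ^ 2
      ≤ 16 * (M ^ 2 + L ^ 2) * ∑ i, (α i ^ 2 + β i ^ 2) := by
  set D := ∑ i, (α i ^ 2 + β i ^ 2)
  have hD : 0 ≤ D := sum_nonneg fun i _ => by positivity
  have hsumC : ∑ k, C k ≤ M ^ 2 := (sqrt_le_iff.1 hCM).2
  have hterm : ∀ k, (2 * (√(C k) * √D + L * (|α k| + |β k|))) ^ 2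
      ≤ 8 * D * C k + 16 * L ^ 2 * (α k ^ 2 + β k ^ 2) := by
    intro k
    have hA : (√(C k) * √D) ^ 2 = D * C k := by
      rw [mul_pow, sq_sqrt (hC0 k), sq_sqrt hD, mul_comm]
    have hB : (|α k| + |β k|) ^ 2 ≤ 2 * (α k ^ 2 + β k ^ 2) := by
      nlinarith [sq_abs (α k), sq_abs (β k), sq_nonneg (|α k| - |β k|)]
    nlinarith [sq_nonneg (√(C k) * √D - L * (|α k| + |β k|)),
      mul_le_mul_of_nonneg_left hB (sq_nonneg L)]
  calc _ ≤ ∑ k, (8 * D * C k + 16 * L ^ 2 * (α k ^ 2 + β k ^ 2)) :=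
        sum_le_sum fun k _ => hterm k
    _ = 8 * D * ∑ k, C k + 16 * L ^ 2 * D := by rw [sum_add_distrib, ← mul_sum, ← mul_sum]
    _ ≤ 16 * (M ^ 2 + L ^ 2) * D := by nlinarith [mul_le_mul_of_nonneg_left hsumC hD]

theorem statement3_general
    {𝒳 : Type*} {n : ℕ} (x x' : Fin n → 𝒳) (f g : 𝒳 → ℝ)
    (hf : ∀ y, f y ∈ Set.Icc (0 : ℝ) 1)
    (Φ : (Fin n → ℝ) → ℝ) (L M s : ℝ)
    -- Φ is twice differentiable
    (hΦ : Differentiable ℝ Φ)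
    (hΦ2 : ∀ k, Differentiable ℝ (pderiv1 Φ k))
    -- ‖∂_k Φ‖_∞ ≤ L for every k
    (hL : ∀ k, ∀ x, |pderiv1 Φ k x| ≤ L)
    -- √(∑_k ‖∑_{l ≠ k} (∂_{lk} Φ)²‖_∞) ≤ M
    (hM : ∃ C : Fin n → ℝ,
      (∀ k, ∀ x, ∑ l ∈ Finset.univ.erase k, (pderiv2 Φ l k x) ^ 2 ≤ C k) ∧
      Real.sqrt (∑ k, C k) ≤ M)
    (hs : 0 < s) :
    -- probability w.r.t. σ uniform on {0,1}ⁿ, as (number of favorable σ) / 2ⁿ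
    ((Finset.univ.filter (fun σ : Fin n → Bool =>
        s < (Yproc Φ x x' f σ - Yproc Φ x x' g σ) -
          (2 ^ n : ℝ)⁻¹ * ∑ τ : Fin n → Bool, (Yproc Φ x x' f τ - Yproc Φ x x' g τ))).card : ℝ)
        / 2 ^ n
      ≤ Real.exp (-s ^ 2 / (8 * (M ^ 2 + L ^ 2) *
          (∑ i, ((f (x i) - g (x i)) ^ 2 + (f (x' i) - g (x' i)) ^ 2)))) := by
  obtain ⟨C, hC, hCM⟩ := hM
  have hC0 : ∀ k, 0 ≤ C k := fun k => (sum_nonneg fun l _ => sq_nonneg _).trans (hC k 0)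
  have hbound := sum_sq_two_mul_sqrt_mul_add_le (fun i => f (x i) - g (x i))
    (fun i => f (x' i) - g (x' i)) C hC0 (L := L) hCM
  refine (card_filter_lt_sub_cubeAvg_le
    (boundedDifferences_Yproc_sub x x' hf g hΦ hΦ2 hL hC) hbound hs.le).trans_eq ?_
  rw [mul_assoc 16, mul_assoc 8]
  generalize (M ^ 2 + L ^ 2) * _ = X
  congr 1
  ring

/-- With `Z(σ) = Y_f(σ) - Y_g(σ)` and
`d(f,g)² = ∑_i (f(x_i)-g(x_i))² + (f(x'_i)-g(x'_i))²`, if `Φ` is twice differentiable with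
`‖∂_k Φ‖_∞ ≤ L` for all `k` and `√(∑_k ‖∑_{l ≠ k} (∂_{lk} Φ)²‖_∞) ≤ M`, then for `σ` uniform on
`{0,1}ⁿ` and every `s > 0`,
`Pr{Z(σ) - E[Z(σ)] > s} ≤ exp(-s² / (8 (M² + L²) d(f,g)²))`. -/
theorem statement3
    {𝒳 : Type*} {n : ℕ} (x x' : Fin n → 𝒳) (f g : 𝒳 → ℝ)
    (hf : ∀ y, f y ∈ Set.Icc (0 : ℝ) 1) (hg : ∀ y, g y ∈ Set.Icc (0 : ℝ) 1)
    (Φ : (Fin n → ℝ) → ℝ) (L M s : ℝ)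
    -- Φ is twice differentiable
    (hΦ : Differentiable ℝ Φ)
    (hΦ2 : ∀ k, Differentiable ℝ (pderiv1 Φ k))
    -- ‖∂_k Φ‖_∞ ≤ L for every k
    (hL : ∀ k, ∀ x, |pderiv1 Φ k x| ≤ L)
    -- √(∑_k ‖∑_{l ≠ k} (∂_{lk} Φ)²‖_∞) ≤ M
    (hM : ∃ C : Fin n → ℝ,
      (∀ k, ∀ x, ∑ l ∈ Finset.univ.erase k, (pderiv2 Φ l k x) ^ 2 ≤ C k) ∧
      Real.sqrt (∑ k, C k) ≤ M)
    (hs : 0 < s) :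
    -- probability w.r.t. σ uniform on {0,1}ⁿ, as (number of favorable σ) / 2ⁿ
    ((Finset.univ.filter (fun σ : Fin n → Bool =>
        s < (Yproc Φ x x' f σ - Yproc Φ x x' g σ) -
          (2 ^ n : ℝ)⁻¹ * ∑ τ : Fin n → Bool, (Yproc Φ x x' f τ - Yproc Φ x x' g τ))).card : ℝ)
        / 2 ^ n
      ≤ Real.exp (-s ^ 2 / (8 * (M ^ 2 + L ^ 2) *
          (∑ i, ((f (x i) - g (x i)) ^ 2 + (f (x' i) - g (x' i)) ^ 2)))) :=
  statement3_general x x' f g hf Φ L M s hΦ hΦ2 hL hM hs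
end

section
/- Let X = (X_1, ..., X_n) be a vector of independent random variables with values in a set 𝒳, let X′ be an independent copy of X, let ℱ be a finite class of functions f : 𝒳 → [0,1], and let Φ : ℝⁿ → ℝ be measurable and bounded on [0,1]ⁿ. Then E[ sup_{f ∈ ℱ} ( E[Φ(f(X))] − Φ(f(X)) ) ] ≤ E_{X,X′} E_σ [ sup_{f ∈ ℱ} ( Φ( Σ_i [σ_i f(X_i) + (1−σ_i) f(X′_i)] e_i ) − Φ( Σ_i [σ_i f(X′_i) + (1−σ_i) f(X_i)] e_i ) ) ], where σ is uniformly distributed on {0,1}ⁿ, independent of X and X′. -/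
/-!
Put `Y = ((X₁, X'₁), …, (Xₙ, X'ₙ))`. Its law is the product of the laws of the pairs
`(Xᵢ, X'ᵢ)`, and since `X'ᵢ` has the law of `Xᵢ`, swapping the two entries in any set of
coordinates preserves it. Hence every `σ`-term on the right has the same expectation
`E sup_f (Φ(f(X')) - Φ(f(X)))`. The left-hand side is at most this: replace `E Φ(f(X))` by
`E' Φ(f(X'))` and use that a supremum of expectations is at most the expectation of the supremum.
-/

open MeasureTheory ProbabilityTheory Finset

section General

variable {α ι κ Ω Ω' : Type*} [MeasurableSpace α] [MeasurableSpace Ω] [MeasurableSpace Ω']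

theorem Finset.integrable_sup' {μ : Measure Ω} {s : Finset κ} (hs : s.Nonempty)
    {f : κ → Ω → ℝ} (hf : ∀ k ∈ s, Integrable (f k) μ) :
    Integrable (fun ω => s.sup' hs fun k => f k ω) μ := by
  have := Finset.sup'_induction hs f (p := (Integrable · μ)) (fun _ h₁ _ h₂ => h₁.sup h₂) hf
  convert this using 1
  ext ω
  rw [Finset.sup'_apply]

theorem Finset.sup'_integral_le_integral_sup' {μ : Measure Ω} {s : Finset κ} (hs : s.Nonempty)
    {f : κ → Ω → ℝ} (hf : ∀ k ∈ s, Integrable (f k) μ) :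
    s.sup' hs (fun k => ∫ ω, f k ω ∂μ) ≤ ∫ ω, s.sup' hs (fun k => f k ω) ∂μ :=
  Finset.sup'_le _ _ fun k hk =>
    integral_mono (hf k hk) (Finset.integrable_sup' hs hf) fun ω => Finset.le_sup' (f · ω) hk

theorem MeasureTheory.MeasurePreserving.integral_comp_of_aestronglyMeasurable {μ : Measure Ω}
    {ν : Measure α} {f : Ω → α} (hf : MeasurePreserving f μ ν) {g : α → ℝ}
    (hg : AEStronglyMeasurable g ν) : ∫ ω, g (f ω) ∂μ = ∫ x, g x ∂ν := by
  rw [← hf.map_eq] at hg ⊢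
  exact (integral_map hf.aemeasurable hg).symm

theorem MeasureTheory.MeasurePreserving.integral_integral_comp {P : Measure Ω} {P' : Measure Ω'}
    [SFinite P] [SFinite P'] {ν : Measure α} {Y : Ω × Ω' → α}
    (hY : MeasurePreserving Y (P.prod P') ν) {g : α → ℝ} (hg : Integrable g ν) :
    ∫ ω, ∫ ω', g (Y (ω, ω')) ∂P' ∂P = ∫ x, g x ∂ν := by
  rw [integral_integral (f := fun ω ω' => g (Y (ω, ω'))) (hY.integrable_comp_of_integrable hg)]
  exact hY.integral_comp_of_aestronglyMeasurable hg.aestronglyMeasurable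

theorem integral_sup'_integral_sub_le {P : Measure Ω} {P' : Measure Ω'} [IsProbabilityMeasure P]
    [IsProbabilityMeasure P'] {s : Finset κ} (hs : s.Nonempty) {a : κ → Ω → ℝ} {b : κ → Ω' → ℝ}
    (ha : ∀ k ∈ s, Integrable (a k) P) (hb : ∀ k ∈ s, Integrable (b k) P')
    (hab : ∀ k ∈ s, ∫ ω, a k ω ∂P = ∫ ω', b k ω' ∂P') :
    ∫ ω, s.sup' hs (fun k => (∫ ω₀, a k ω₀ ∂P) - a k ω) ∂P
      ≤ ∫ ω, ∫ ω', s.sup' hs (fun k => b k ω' - a k ω) ∂P' ∂P := by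
  have hdiff : Integrable (fun p : Ω × Ω' => s.sup' hs fun k => b k p.2 - a k p.1) (P.prod P') :=
    Finset.integrable_sup' hs fun k hk => ((hb k hk).comp_snd P).sub ((ha k hk).comp_fst P')
  refine integral_mono (Finset.integrable_sup' hs fun k hk => (integrable_const _).sub (ha k hk))
    hdiff.integral_prod_left fun ω => ?_
  calc s.sup' hs (fun k => (∫ ω₀, a k ω₀ ∂P) - a k ω)
      = s.sup' hs (fun k => ∫ ω', (b k ω' - a k ω) ∂P') :=
        Finset.sup'_congr hs rfl fun k hk => by
          rw [integral_sub (hb k hk) (integrable_const _), hab k hk, integral_const, probReal_univ,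
            one_smul]
    _ ≤ ∫ ω', s.sup' hs (fun k => b k ω' - a k ω) ∂P' :=
        Finset.sup'_integral_le_integral_sup' hs fun k hk => (hb k hk).sub (integrable_const _)

variable [Fintype ι]

theorem MeasureTheory.MeasurePreserving.zip {P : Measure Ω} {P' : Measure Ω'} [SFinite P]
    [SFinite P'] {m m' : ι → Measure α} [∀ i, SigmaFinite (m i)] [∀ i, SigmaFinite (m' i)]
    {U : Ω → ι → α} {V : Ω' → ι → α} (hU : MeasurePreserving U P (Measure.pi m))
    (hV : MeasurePreserving V P' (Measure.pi m')) :
    MeasurePreserving (fun p i => (U p.1 i, V p.2 i)) (P.prod P')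
      (Measure.pi fun i => (m i).prod (m' i)) :=
  ((measurePreserving_arrowProdEquivProdArrow α α ι m m').symm _).comp (hU.prod hV)

def swapIf (σ : ι → Bool) (v : ι → α × α) : ι → α × α :=
  fun i => if σ i then v i else (v i).swap

theorem measurePreserving_swapIf (m : ι → Measure α) [∀ i, SigmaFinite (m i)] (σ : ι → Bool) :
    MeasurePreserving (swapIf σ) (Measure.pi fun i => (m i).prod (m i))
      (Measure.pi fun i => (m i).prod (m i)) := by
  refine measurePreserving_pi (f := fun i (x : α × α) => if σ i then x else x.swap) _ _ fun i => ?_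
  cases σ i
  · exact Measure.measurePreserving_swap
  · exact MeasurePreserving.id _

theorem integral_average_swapIf [DecidableEq ι] (m : ι → Measure α) [∀ i, SigmaFinite (m i)]
    {G : (ι → α × α) → ℝ} (hG : Integrable G (Measure.pi fun i => (m i).prod (m i))) :
    ∫ v, (2 ^ Fintype.card ι : ℝ)⁻¹ * ∑ σ : ι → Bool, G (swapIf σ v)
        ∂(Measure.pi fun i => (m i).prod (m i))
      = ∫ v, G v ∂(Measure.pi fun i => (m i).prod (m i)) := by
  rw [integral_const_mul, integral_finsetSum (f := fun σ v => G (swapIf σ v)) _ fun σ _ =>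
    (measurePreserving_swapIf m σ).integrable_comp_of_integrable hG]
  simp_rw [(measurePreserving_swapIf m _).integral_comp_of_aestronglyMeasurable
    hG.aestronglyMeasurable]
  simp [Finset.card_univ]

theorem MeasureTheory.MeasurePreserving.integral_integral_average_swapIf [DecidableEq ι]
    {P : Measure Ω} {P' : Measure Ω'} [SFinite P] [SFinite P'] {m : ι → Measure α}
    [∀ i, SigmaFinite (m i)] {Y : Ω × Ω' → ι → α × α}
    (hY : MeasurePreserving Y (P.prod P') (Measure.pi fun i => (m i).prod (m i)))
    {G : (ι → α × α) → ℝ} (hG : Integrable G (Measure.pi fun i => (m i).prod (m i))) :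
    ∫ ω, ∫ ω', (2 ^ Fintype.card ι : ℝ)⁻¹ * ∑ σ : ι → Bool, G (swapIf σ (Y (ω, ω'))) ∂P' ∂P
      = ∫ v, G v ∂(Measure.pi fun i => (m i).prod (m i)) := by
  rw [hY.integral_integral_comp (g := fun v => (2 ^ Fintype.card ι : ℝ)⁻¹ * ∑ σ, G (swapIf σ v))
    ((integrable_finsetSum _ fun σ _ =>
      (measurePreserving_swapIf m σ).integrable_comp_of_integrable hG).const_mul _)]
  exact integral_average_swapIf m hG

end General

section SupDiff

variable {𝒳 ι : Type*}

theorem integrable_comp_of_mem_Icc [MeasurableSpace 𝒳] {β : Type*} [MeasurableSpace β]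
    {μ : Measure β} [IsFiniteMeasure μ] {Φ : (ι → ℝ) → ℝ} (hΦ : Measurable Φ) {K : ℝ}
    (hΦK : ∀ y : ι → ℝ, (∀ i, y i ∈ Set.Icc (0 : ℝ) 1) → |Φ y| ≤ K) {f : 𝒳 → ℝ}
    (hf : Measurable f) (hf01 : ∀ x, f x ∈ Set.Icc (0 : ℝ) 1) {u : β → ι → 𝒳}
    (hu : Measurable u) : Integrable (fun b => Φ fun i => f (u b i)) μ :=
  .of_bound (hΦ.comp (by fun_prop)).aestronglyMeasurable K
    (ae_of_all _ fun _ => hΦK _ fun _ => hf01 _)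

def supDiff (F : Finset (𝒳 → ℝ)) (hF : F.Nonempty) (Φ : (ι → ℝ) → ℝ) (v : ι → 𝒳 × 𝒳) : ℝ :=
  F.sup' hF fun f => Φ (fun i => f (v i).1) - Φ (fun i => f (v i).2)

theorem supDiff_swapIf (F : Finset (𝒳 → ℝ)) (hF : F.Nonempty) (Φ : (ι → ℝ) → ℝ)
    (σ : ι → Bool) (v : ι → 𝒳 × 𝒳) :
    supDiff F hF Φ (swapIf σ v) = F.sup' hF fun f =>
      Φ (fun i => if σ i then f (v i).1 else f (v i).2)
        - Φ (fun i => if σ i then f (v i).2 else f (v i).1) := by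
  refine Finset.sup'_congr hF rfl fun f _ => ?_
  congr 2 <;> funext i <;> unfold swapIf <;> split_ifs <;> rfl

theorem integrable_supDiff [MeasurableSpace 𝒳] {F : Finset (𝒳 → ℝ)} (hF : F.Nonempty)
    {Φ : (ι → ℝ) → ℝ} (μ : Measure (ι → 𝒳 × 𝒳)) [IsFiniteMeasure μ] (hFmeas : ∀ f ∈ F, Measurable f)
    (hFrange : ∀ f ∈ F, ∀ x, f x ∈ Set.Icc (0 : ℝ) 1) (hΦ : Measurable Φ) {K : ℝ}
    (hΦK : ∀ y : ι → ℝ, (∀ i, y i ∈ Set.Icc (0 : ℝ) 1) → |Φ y| ≤ K) :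
    Integrable (supDiff F hF Φ) μ :=
  Finset.integrable_sup' hF fun f hf =>
    (integrable_comp_of_mem_Icc hΦ hΦK (hFmeas f hf) (hFrange f hf) (by fun_prop)).sub
      (integrable_comp_of_mem_Icc hΦ hΦK (hFmeas f hf) (hFrange f hf) (by fun_prop))

end SupDiff

/-- **symmetrization.** Let `X = (X_1,…,X_n)` be independent `𝒳`-valued random
variables, `X'` an independent copy of `X`, `F` a finite class of measurable functions
`f : 𝒳 → [0,1]`, and `Φ : ℝⁿ → ℝ` measurable and bounded on `[0,1]ⁿ`. Then
`E[sup_{f ∈ F} (E[Φ(f(X))] - Φ(f(X)))]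
  ≤ E_{X,X'} E_σ [sup_{f ∈ F} (Φ(∑_i [σ_i f(X_i) + (1-σ_i) f(X'_i)] e_i)
        - Φ(∑_i [σ_i f(X'_i) + (1-σ_i) f(X_i)] e_i))]`,
where `σ` is uniform on `{0,1}ⁿ` (its expectation is the average over `Fin n → Bool`),
independent of `X` and `X'`. -/
theorem statement8
    (𝒳 Ω Ω' : Type) [MeasurableSpace 𝒳] [MeasurableSpace Ω] [MeasurableSpace Ω']
    (P : Measure Ω) (P' : Measure Ω')
    [IsProbabilityMeasure P] [IsProbabilityMeasure P']
    (n : ℕ) (X : Fin n → Ω → 𝒳) (X' : Fin n → Ω' → 𝒳)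
    (F : Finset (𝒳 → ℝ)) (hFne : F.Nonempty)
    (Φ : (Fin n → ℝ) → ℝ) (K : ℝ)
    -- X is a vector of independent random variables
    (hXmeas : ∀ i, Measurable (X i))
    (hXindep : iIndepFun X P)
    -- X' is an independent copy of X (modelled on its own probability space)
    (hX'meas : ∀ i, Measurable (X' i))
    (hX'indep : iIndepFun X' P')
    (hX'copy : ∀ i, Measure.map (X' i) P' = Measure.map (X i) P)
    -- F is a finite class of measurable functions with values in [0,1]
    (hFmeas : ∀ f ∈ F, Measurable f)
    (hFrange : ∀ f ∈ F, ∀ x : 𝒳, f x ∈ Set.Icc (0 : ℝ) 1)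
    -- Φ is measurable and bounded on [0,1]ⁿ
    (hΦmeas : Measurable Φ)
    (hΦbdd : ∀ y : Fin n → ℝ, (∀ i, y i ∈ Set.Icc (0 : ℝ) 1) → |Φ y| ≤ K) :
    (∫ ω, F.sup' hFne (fun f =>
        (∫ ω₀, Φ (fun i => f (X i ω₀)) ∂P) - Φ (fun i => f (X i ω))) ∂P)
      ≤ ∫ ω, (∫ ω', (2 ^ n : ℝ)⁻¹ * ∑ σ : Fin n → Bool,
          F.sup' hFne (fun f =>
            Φ (fun i => if σ i then f (X i ω) else f (X' i ω'))
              - Φ (fun i => if σ i then f (X' i ω') else f (X i ω))) ∂P') ∂P := by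
  have hU : MeasurePreserving (fun ω i => X i ω) P (Measure.pi fun i => P.map (X i)) :=
    ⟨by fun_prop, hXindep.map_fun_eq_pi_map fun i => (hXmeas i).aemeasurable⟩
  have hV : MeasurePreserving (fun ω' i => X' i ω') P' (Measure.pi fun i => P.map (X i)) :=
    ⟨by fun_prop, by
      rw [hX'indep.map_fun_eq_pi_map fun i => (hX'meas i).aemeasurable]; simp_rw [hX'copy]⟩
  have hY := hU.zip hV
  have hG := integrable_supDiff hFne (Measure.pi fun i => (P.map (X i)).prod (P.map (X i)))
    hFmeas hFrange hΦmeas hΦbdd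
  have hΦX : ∀ f ∈ F, ∫ ω, Φ (fun i => f (X i ω)) ∂P = ∫ ω', Φ (fun i => f (X' i ω')) ∂P' :=
    fun f hf => by
      have := hFmeas f hf
      have hm : AEStronglyMeasurable (fun u : Fin n → 𝒳 => Φ fun i => f (u i))
        (Measure.pi fun i => P.map (X i)) := (hΦmeas.comp (by fun_prop)).aestronglyMeasurable
      rw [hU.integral_comp_of_aestronglyMeasurable hm, hV.integral_comp_of_aestronglyMeasurable hm]
  calc _ ≤ ∫ ω, ∫ ω', F.sup' hFne (fun f =>
          Φ (fun i => f (X' i ω')) - Φ (fun i => f (X i ω))) ∂P' ∂P :=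
        integral_sup'_integral_sub_le hFne
          (fun f hf => integrable_comp_of_mem_Icc hΦmeas hΦbdd (hFmeas f hf) (hFrange f hf)
            hU.measurable)
          (fun f hf => integrable_comp_of_mem_Icc hΦmeas hΦbdd (hFmeas f hf) (hFrange f hf)
            hV.measurable) hΦX
    _ = ∫ ω, ∫ ω', supDiff F hFne Φ
          (swapIf (fun _ => false) fun i => (X i ω, X' i ω')) ∂P' ∂P := by
        simp only [supDiff_swapIf, Bool.false_eq_true, if_false]
    _ = ∫ v, supDiff F hFne Φ v ∂(Measure.pi fun i => (P.map (X i)).prod (P.map (X i))) := by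
        have hσ := measurePreserving_swapIf (fun i => P.map (X i)) fun _ => false
        rw [hY.integral_integral_comp (g := fun v => supDiff F hFne Φ (swapIf _ v))
          (hσ.integrable_comp_of_integrable hG)]
        exact hσ.integral_comp_of_aestronglyMeasurable hG.aestronglyMeasurable
    _ = _ := by
        rw [← hY.integral_integral_average_swapIf hG]
        simp only [supDiff_swapIf, Fintype.card_fin]
end

section
/- Let X = (X_1, ..., X_n) be a vector of independent identically distributed random variables with values in a set 𝒳, and let ℱ be a finite class of functions f : 𝒳 → [0,1]. Then E[ sup_{f ∈ ℱ} ( E[f(X_1)] − (1/n) Σ_{i=1}^n f(X_i) ) ] ≤ (2/n) E[ R(ℱ(X)) ]. -/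
/-!
Symmetrization. For a fixed sample `x`, `∫ f dμ` is the expected empirical mean of `f` on an
independent ghost sample `y`, and a supremum of expectations is at most the expectation of the
supremum; so the left-hand side is bounded by `E sup_f (Pₙ^y f - Pₙ^x f)`. Exchanging `xᵢ` and
`yᵢ` on the coordinates where `εᵢ = -1` does not change the law of `(x, y)` and turns
`n (Pₙ^y f - Pₙ^x f)` into `∑ εᵢ f(yᵢ) + ∑ (-εᵢ) f(xᵢ)`. Splitting the supremum over the two
sums and averaging over `ε` gives `2/n` times the expected Rademacher average.
-/

open MeasureTheory ProbabilityTheory Finset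

theorem MeasureTheory.Integrable.finset_sup' {α ι : Type*} [MeasurableSpace α] {μ : Measure α}
    {s : Finset ι} (hs : s.Nonempty) {g : ι → α → ℝ} (hg : ∀ i ∈ s, Integrable (g i) μ) :
    Integrable (fun x => s.sup' hs fun i => g i x) μ := by
  simp_rw [← Finset.sup'_apply]
  exact sup'_induction hs g (p := (Integrable · μ)) (fun _ h₁ _ h₂ => h₁.sup h₂) hg

def swapUnless {ι α : Type*} (ε : ι → Bool) (p : (ι → α) × (ι → α)) : (ι → α) × (ι → α) :=
  (fun i => if ε i then p.1 i else p.2 i, fun i => if ε i then p.2 i else p.1 i)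

theorem measurePreserving_swapUnless {ι α : Type*} [Fintype ι] [MeasurableSpace α]
    (μ : Measure α) [SigmaFinite μ] (ε : ι → Bool) :
    MeasurePreserving (swapUnless ε)
      ((Measure.pi fun _ : ι => μ).prod (Measure.pi fun _ => μ))
      ((Measure.pi fun _ : ι => μ).prod (Measure.pi fun _ => μ)) := by
  have hq := measurePreserving_arrowProdEquivProdArrow α α ι (fun _ => μ) (fun _ => μ)
  have hswap : ∀ i, MeasurePreserving (fun z : α × α => if ε i then z else z.swap)
      (μ.prod μ) (μ.prod μ) := fun i => by
    cases ε i
    · exact Measure.measurePreserving_swap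
    · exact MeasurePreserving.id _
  have hT := measurePreserving_pi _ _ hswap
  convert hq.comp (hT.comp hq.symm) using 1
  funext p
  ext i <;> by_cases h : ε i <;>
    simp [swapUnless, h, MeasurableEquiv.arrowProdEquivProdArrow, Equiv.arrowProdEquivProdArrow]

noncomputable section Symmetrization

variable {𝒳 : Type*} [MeasurableSpace 𝒳] {n : ℕ}

def empiricalMean (f : 𝒳 → ℝ) (x : Fin n → 𝒳) : ℝ := (n : ℝ)⁻¹ * ∑ i, f (x i)

def rademacherSup (F : Finset (𝒳 → ℝ)) (hF : F.Nonempty) (ε : Fin n → Bool) (x : Fin n → 𝒳) :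
    ℝ :=
  F.sup' hF fun f => ∑ i, (if ε i then (1 : ℝ) else -1) * f (x i)

/-- The Rademacher average `R(F(x))`, with the expectation over uniform signs written as an
average over `ε : Fin n → Bool`. -/
def rademacherAverage (F : Finset (𝒳 → ℝ)) (hF : F.Nonempty) (x : Fin n → 𝒳) : ℝ :=
  (2 ^ n : ℝ)⁻¹ * ∑ ε : Fin n → Bool, rademacherSup F hF ε x

def ghostSup (F : Finset (𝒳 → ℝ)) (hF : F.Nonempty) (p : (Fin n → 𝒳) × (Fin n → 𝒳)) : ℝ :=
  F.sup' hF fun f => empiricalMean f p.2 - empiricalMean f p.1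

variable {μ : Measure 𝒳} [IsProbabilityMeasure μ]

local notation "ν" => (Measure.pi fun _ : Fin n => μ)

theorem integrable_empiricalMean {f : 𝒳 → ℝ} (hf : Integrable f μ) :
    Integrable (empiricalMean (n := n) f) ν :=
  (integrable_finsetSum _ fun _ _ => integrable_comp_eval hf).const_mul _

theorem integral_empiricalMean (hn : 0 < n) {f : 𝒳 → ℝ} (hf : Integrable f μ) :
    ∫ x, empiricalMean f x ∂ν = ∫ a, f a ∂μ := by
  simp only [empiricalMean]
  rw [integral_const_mul, integral_finsetSum _ fun _ _ => integrable_comp_eval hf]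
  simp only [fun i => integral_comp_eval (μ := fun _ : Fin n => μ) (i := i)
      hf.aestronglyMeasurable, sum_const, card_univ, Fintype.card_fin, nsmul_eq_mul]
  field_simp

theorem integrable_rademacherSup {F : Finset (𝒳 → ℝ)} (hF : F.Nonempty)
    (hFint : ∀ f ∈ F, Integrable f μ) (ε : Fin n → Bool) :
    Integrable (rademacherSup F hF ε) ν :=
  Integrable.finset_sup' hF fun f hf =>
    integrable_finsetSum _ fun _ _ => (integrable_comp_eval (hFint f hf)).const_mul _

theorem integrable_rademacherAverage {F : Finset (𝒳 → ℝ)} (hF : F.Nonempty)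
    (hFint : ∀ f ∈ F, Integrable f μ) : Integrable (rademacherAverage (n := n) F hF) ν :=
  (integrable_finsetSum _ fun ε _ => integrable_rademacherSup hF hFint ε).const_mul _

theorem integrable_sup_sub_empiricalMean {F : Finset (𝒳 → ℝ)} (hF : F.Nonempty)
    (hFint : ∀ f ∈ F, Integrable f μ) :
    Integrable (fun x : Fin n → 𝒳 => F.sup' hF fun f => (∫ a, f a ∂μ) - empiricalMean f x) ν :=
  Integrable.finset_sup' hF fun f hf =>
    (integrable_const _).sub (integrable_empiricalMean (hFint f hf))

theorem integrable_ghostSup {F : Finset (𝒳 → ℝ)} (hF : F.Nonempty)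
    (hFint : ∀ f ∈ F, Integrable f μ) : Integrable (ghostSup (n := n) F hF) (Measure.prod ν ν) :=
  Integrable.finset_sup' hF fun f hf =>
    ((integrable_empiricalMean (hFint f hf)).comp_snd _).sub
      ((integrable_empiricalMean (hFint f hf)).comp_fst _)

theorem sup_sub_empiricalMean_le_integral_ghostSup (hn : 0 < n) {F : Finset (𝒳 → ℝ)}
    (hF : F.Nonempty) (hFint : ∀ f ∈ F, Integrable f μ) (x : Fin n → 𝒳) :
    (F.sup' hF fun f => (∫ a, f a ∂μ) - empiricalMean f x) ≤ ∫ y, ghostSup F hF (x, y) ∂ν := by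
  refine sup'_le _ _ fun f hf => ?_
  have hmean := integrable_empiricalMean (n := n) (hFint f hf)
  calc (∫ a, f a ∂μ) - empiricalMean f x = ∫ y, (empiricalMean f y - empiricalMean f x) ∂ν := by
        rw [integral_sub hmean (integrable_const _), integral_empiricalMean hn (hFint f hf)]
        simp
    _ ≤ ∫ y, ghostSup F hF (x, y) ∂ν :=
        integral_mono (hmean.sub (integrable_const _))
          (Integrable.finset_sup' hF fun g hg =>
            (integrable_empiricalMean (hFint g hg)).sub (integrable_const (empiricalMean g x)))
          fun y => le_sup' (fun g => empiricalMean g y - empiricalMean g x) hf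

omit [MeasurableSpace 𝒳] in
theorem ghostSup_swapUnless_le (F : Finset (𝒳 → ℝ)) (hF : F.Nonempty) (ε : Fin n → Bool)
    (p : (Fin n → 𝒳) × (Fin n → 𝒳)) :
    ghostSup F hF (swapUnless ε p) ≤
      (n : ℝ)⁻¹ * (rademacherSup F hF ε p.2 + rademacherSup F hF (fun i => !ε i) p.1) := by
  refine sup'_le _ _ fun f hf => ?_
  have hsigned : empiricalMean f (swapUnless ε p).2 - empiricalMean f (swapUnless ε p).1 =
      (n : ℝ)⁻¹ * (∑ i, (if ε i then (1 : ℝ) else -1) * f (p.2 i) +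
        ∑ i, (if !ε i then (1 : ℝ) else -1) * f (p.1 i)) := by
    simp only [empiricalMean, ← mul_sub, ← sum_sub_distrib, ← sum_add_distrib]
    congr 1
    refine sum_congr rfl fun i _ => ?_
    by_cases h : ε i <;> simp [swapUnless, h] <;> ring
  rw [hsigned]
  gcongr
  · exact le_sup' (fun g => ∑ i, (if ε i then (1 : ℝ) else -1) * g (p.2 i)) hf
  · exact le_sup' (fun g => ∑ i, (if !ε i then (1 : ℝ) else -1) * g (p.1 i)) hf

theorem integral_ghostSup_le_integral_rademacherSup {F : Finset (𝒳 → ℝ)} (hF : F.Nonempty)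
    (hFint : ∀ f ∈ F, Integrable f μ) (ε : Fin n → Bool) :
    ∫ p, ghostSup F hF p ∂(Measure.prod ν ν) ≤ (n : ℝ)⁻¹ *
      ((∫ x, rademacherSup F hF ε x ∂ν) + ∫ x, rademacherSup F hF (fun i => !ε i) x ∂ν) := by
  have hswap := measurePreserving_swapUnless μ ε
  have hghost := integrable_ghostSup (n := n) hF hFint
  have hRint := integrable_rademacherSup (n := n) hF hFint
  calc ∫ p, ghostSup F hF p ∂(Measure.prod ν ν)
      = ∫ p, ghostSup F hF (swapUnless ε p) ∂(Measure.prod ν ν) := by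
        nth_rewrite 1 [← hswap.map_eq]
        rw [integral_map hswap.measurable.aemeasurable
          (by rw [hswap.map_eq]; exact hghost.aestronglyMeasurable)]
    _ ≤ ∫ p, (n : ℝ)⁻¹ * (rademacherSup F hF ε p.2 + rademacherSup F hF (fun i => !ε i) p.1)
          ∂(Measure.prod ν ν) :=
        integral_mono (hswap.integrable_comp_of_integrable hghost)
          ((((hRint ε).comp_snd _).add ((hRint _).comp_fst _)).const_mul _)
          (ghostSup_swapUnless_le F hF ε)
    _ = _ := by
        rw [integral_const_mul, integral_add ((hRint ε).comp_snd _) ((hRint _).comp_fst _),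
          integral_fun_snd, integral_fun_fst]
        simp

theorem integral_ghostSup_le {F : Finset (𝒳 → ℝ)} (hF : F.Nonempty)
    (hFint : ∀ f ∈ F, Integrable f μ) :
    ∫ p, ghostSup F hF p ∂(Measure.prod ν ν) ≤ 2 / n * ∫ x, rademacherAverage F hF x ∂ν := by
  set I := ∫ p, ghostSup F hF p ∂(Measure.prod ν ν)
  set a : (Fin n → Bool) → ℝ := fun ε => ∫ x, rademacherSup F hF ε x ∂ν
  have hflip : ∑ ε : Fin n → Bool, a (fun i => !ε i) = ∑ ε, a ε :=
    Equiv.sum_comp (Function.Involutive.toPerm _ fun ε => funext fun i => Bool.not_not (ε i)) a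
  have havg : I = (2 ^ n : ℝ)⁻¹ * ∑ _ε : Fin n → Bool, I := by
    simp [sum_const, card_univ]
  calc I = (2 ^ n : ℝ)⁻¹ * ∑ _ε : Fin n → Bool, I := havg
    _ ≤ (2 ^ n : ℝ)⁻¹ * ∑ ε : Fin n → Bool, (n : ℝ)⁻¹ * (a ε + a fun i => !ε i) := by
        gcongr with ε
        exact integral_ghostSup_le_integral_rademacherSup hF hFint ε
    _ = 2 / n * ((2 ^ n : ℝ)⁻¹ * ∑ ε, a ε) := by
        rw [← mul_sum, sum_add_distrib, hflip]
        ring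
    _ = 2 / n * ∫ x, rademacherAverage F hF x ∂ν := by
        simp only [rademacherAverage, a]
        rw [integral_const_mul, integral_finsetSum _ fun ε _ => integrable_rademacherSup hF hFint ε]

theorem integral_sup_sub_empiricalMean_le (hn : 0 < n) {F : Finset (𝒳 → ℝ)} (hF : F.Nonempty)
    (hFint : ∀ f ∈ F, Integrable f μ) :
    ∫ x, (F.sup' hF fun f => (∫ a, f a ∂μ) - empiricalMean f x) ∂ν ≤
      2 / n * ∫ x, rademacherAverage F hF x ∂ν := by
  have hghost := integrable_ghostSup (n := n) hF hFint
  calc _ ≤ ∫ x, ∫ y, ghostSup F hF (x, y) ∂ν ∂ν :=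
        integral_mono (integrable_sup_sub_empiricalMean hF hFint) hghost.integral_prod_left
          (sup_sub_empiricalMean_le_integral_ghostSup hn hF hFint)
    _ = ∫ p, ghostSup F hF p ∂(Measure.prod ν ν) := integral_integral hghost
    _ ≤ _ := integral_ghostSup_le hF hFint

end Symmetrization

/-- Let `X = (X_1,…,X_n)` be i.i.d. `𝒳`-valued random variables and `F` a
finite class of measurable functions `f : 𝒳 → [0,1]`. Then
`E[sup_{f ∈ F} (E[f(X_1)] - (1/n) ∑_i f(X_i))] ≤ (2/n) E[R(F(X))]`, where the Rademacher
average is `R(F(x)) = E_ε sup_{f ∈ F} ∑_i ε_i f(x_i)` with `ε` uniform on `{-1,1}ⁿ`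
(realized as the average over `ε : Fin n → Bool` of `∑_i (±1) f(x_i)`). -/
theorem statement16
    (𝒳 Ω : Type) [MeasurableSpace 𝒳] [MeasurableSpace Ω]
    (P : Measure Ω) [IsProbabilityMeasure P]
    (n : ℕ) (hn : 0 < n) (X : Fin n → Ω → 𝒳)
    (F : Finset (𝒳 → ℝ)) (hFne : F.Nonempty)
    -- X is a vector of independent, identically distributed random variables
    (hXmeas : ∀ i, Measurable (X i))
    (hXindep : iIndepFun X P)
    (hXident : ∀ i, Measure.map (X i) P = Measure.map (X ⟨0, hn⟩) P)
    -- F is a finite class of measurable functions with values in [0,1]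
    (hFmeas : ∀ f ∈ F, Measurable f)
    (hFrange : ∀ f ∈ F, ∀ x : 𝒳, f x ∈ Set.Icc (0 : ℝ) 1) :
    (∫ ω, F.sup' hFne (fun f =>
        (∫ ω', f (X ⟨0, hn⟩ ω') ∂P) - (n : ℝ)⁻¹ * ∑ i, f (X i ω)) ∂P)
      ≤ (2 / n) * ∫ ω, (2 ^ n : ℝ)⁻¹ * ∑ ε : Fin n → Bool,
          F.sup' hFne (fun f => ∑ i, (if ε i then (1 : ℝ) else -1) * f (X i ω)) ∂P := by
  set μ := P.map (X ⟨0, hn⟩)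
  have : IsProbabilityMeasure μ := Measure.isProbabilityMeasure_map (hXmeas _).aemeasurable
  have hsample : AEMeasurable (fun ω i => X i ω) P := (measurable_pi_lambda _ hXmeas).aemeasurable
  have hlaw : P.map (fun ω i => X i ω) = Measure.pi fun _ => μ := by
    rw [hXindep.map_fun_eq_pi_map fun i => (hXmeas i).aemeasurable]
    simp_rw [hXident]
  have hFint : ∀ f ∈ F, Integrable f μ := fun f hf =>
    Integrable.of_bound (hFmeas f hf).aestronglyMeasurable 1 <| ae_of_all _ fun x =>
      abs_le.2 ⟨by linarith [(hFrange f hf x).1], (hFrange f hf x).2⟩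
  have hmean : ∀ f ∈ F, ∫ ω, f (X ⟨0, hn⟩ ω) ∂P = ∫ a, f a ∂μ := fun f hf =>
    (integral_map (hXmeas _).aemeasurable (hFmeas f hf).aestronglyMeasurable).symm
  have hlhs := integrable_sup_sub_empiricalMean hFne hFint (n := n)
  have hrhs := integrable_rademacherAverage hFne hFint (n := n)
  rw [← hlaw] at hlhs hrhs
  calc _ = ∫ x, (F.sup' hFne fun f => (∫ a, f a ∂μ) - empiricalMean f x) ∂(P.map _) := by
        rw [integral_map hsample hlhs.aestronglyMeasurable]
        refine integral_congr_ae (ae_of_all _ fun ω => sup'_congr hFne rfl fun f hf => ?_)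
        rw [hmean f hf]; rfl
    _ ≤ 2 / n * ∫ x, rademacherAverage F hFne x ∂(P.map _) :=
        hlaw ▸ integral_sup_sub_empiricalMean_le hn hFne hFint
    _ = _ := by rw [integral_map hsample hrhs.aestronglyMeasurable]; rfl
end
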